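/- arXiv:math/0405081 — 3 statements merged into one kernel-verified Lean document; each statement's English description precedes it below -/
import Mathlib

section
/- Let P_ω be the union of an increasing chain of forcing posets P₀ ⊆ P₁ ⊆ ⋯ where each P_n is a complete subposet of P_{n+1}, similarly Q_ω for Q₀ ⊆ Q₁ ⊆ ⋯, and let f : P_ω → Q_ω be such that (a) f restricted to P_n is a complete embedding of P_n into Q_n for each n, and (b) for all p ∈ P_{n+1}, q ∈ Q_n, and r ∈ P_n a reduction of p: if f(r) is compatible with q in Q_n, then f(p) is compatible with q in Q_{n+1}. Then f : P_ω → Q_ω is a complete embedding. -/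
open Set

variable {α β : Type*}

/-- `p` and `q` are compatible within the forcing poset `S`. -/
def compatIn [Preorder α] (S : Set α) (p q : α) : Prop :=
  ∃ r ∈ S, r ≤ p ∧ r ≤ q

/-- `D` is predense in the forcing poset `S`. -/
def predenseIn [Preorder α] (S D : Set α) : Prop :=
  ∀ p ∈ S, ∃ d ∈ D, compatIn S p d

/-- `r ∈ P` is a reduction of `p ∈ P'` (for `P ⊆ P'`): every `p' ∈ P` with
`p' ≤ r` is compatible with `p` in `P'`. -/
def isReduction [Preorder α] (P P' : Set α) (r p : α) : Prop :=
  r ∈ P ∧ ∀ p' ∈ P, p' ≤ r → compatIn P' p' p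

/-- `P` is a complete subposet of `P'`: `P ⊆ P'`, compatibility in `P'` of
members of `P` reflects to `P`, and every member of `P'` has a reduction in `P`. -/
def completeSub [Preorder α] (P P' : Set α) : Prop :=
  P ⊆ P' ∧ (∀ p ∈ P, ∀ q ∈ P, compatIn P' p q → compatIn P p q) ∧
    ∀ p' ∈ P', ∃ r, isReduction P P' r p'

/-- `f` is a complete embedding of the forcing poset `P` into `Q`:
it preserves membership, order, incompatibility, and predense sets. -/
def completeEmb [Preorder α] [Preorder β] (P : Set α) (Q : Set β) (f : α → β) : Prop :=
  (∀ p ∈ P, f p ∈ Q) ∧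
  (∀ p ∈ P, ∀ q ∈ P, q ≤ p → f q ≤ f p) ∧
  (∀ p ∈ P, ∀ q ∈ P, ¬ compatIn P p q → ¬ compatIn Q (f p) (f q)) ∧
  (∀ D ⊆ P, predenseIn P D → predenseIn Q (f '' D))

section Aux

variable [Preorder α] [Preorder β]

lemma chain_mono (P : ℕ → Set α) (hP : ∀ n, completeSub (P n) (P (n + 1))) :
    ∀ {n m : ℕ}, n ≤ m → P n ⊆ P m := by
  intro n m h
  induction h with
  | refl => exact subset_rfl
  | step _ ih => exact ih.trans (hP _).1

lemma compat_reflect (P : ℕ → Set α) (hP : ∀ n, completeSub (P n) (P (n + 1))) :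
    ∀ {n m : ℕ}, n ≤ m → ∀ p ∈ P n, ∀ q ∈ P n, compatIn (P m) p q → compatIn (P n) p q := by
  intro n m h
  induction h with
  | refl => exact fun p _ q _ hc => hc
  | @step m hm ih =>
    intro p hp q hq hc
    exact ih p hp q hq ((hP m).2.1 p (chain_mono P hP hm hp) q (chain_mono P hP hm hq) hc)

/-- A chain of successive reductions between levels `n` and `m`. -/
def redChain (P : ℕ → Set α) (n m : ℕ) (g : ℕ → α) : Prop :=
  ∀ k, n ≤ k → k < m → isReduction (P k) (P (k + 1)) (g k) (g (k + 1))

lemma redChain_exists (P : ℕ → Set α) (hP : ∀ n, completeSub (P n) (P (n + 1))) (n : ℕ) :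
    ∀ m, ∀ s ∈ P m, n ≤ m → ∃ g : ℕ → α, g m = s ∧ redChain P n m g := by
  intro m
  induction m with
  | zero =>
    intro s hs _
    exact ⟨fun _ => s, rfl, fun k _ hk => absurd hk (Nat.not_lt_zero k)⟩
  | succ m ih =>
    intro s hs hnm
    rcases Nat.lt_or_ge n (m + 1) with h | h
    · have hn : n ≤ m := Nat.lt_succ_iff.mp h
      obtain ⟨r, hr⟩ := (hP m).2.2 s hs
      obtain ⟨g, hgm, hchain⟩ := ih r hr.1 hn
      refine ⟨Function.update g (m + 1) s, Function.update_self _ _ _, ?_⟩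
      intro k hk hk'
      rcases Nat.lt_or_ge k m with hkm | hkm
      · have h1 : k ≠ m + 1 := by omega
        have h2 : k + 1 ≠ m + 1 := by omega
        rw [Function.update_of_ne h1, Function.update_of_ne h2]
        exact hchain k hk hkm
      · have hkeq : k = m := by omega
        subst hkeq
        rw [Function.update_of_ne (by omega : k ≠ k + 1), Function.update_self, hgm]
        exact hr
    · -- n = m + 1, vacuous chain
      exact ⟨fun _ => s, rfl, fun k hk hk' => by omega⟩

lemma redChain_mem (P : ℕ → Set α) {n m : ℕ} {g : ℕ → α}
    (hchain : redChain P n m g) (hgm : g m ∈ P m) :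
    ∀ k, n ≤ k → k ≤ m → g k ∈ P k := by
  intro k hk hk'
  rcases Nat.lt_or_ge k m with h | h
  · exact (hchain k hk h).1
  · have : k = m := le_antisymm hk' h
    subst this; exact hgm

lemma redChain_reduction (P : ℕ → Set α) {n m : ℕ} {g : ℕ → α}
    (hchain : redChain P n m g) :
    ∀ j k, k + j = m → n ≤ k → ∀ p' ∈ P k, p' ≤ g k → compatIn (P m) p' (g m) := by
  intro j
  induction j with
  | zero =>
    intro k hk hnk p' hp' hle
    have : k = m := by omega
    subst this
    exact ⟨p', hp', le_refl _, hle⟩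
  | succ j ih =>
    intro k hk hnk p' hp' hle
    have hkm : k < m := by omega
    obtain ⟨w, hw, hw1, hw2⟩ := (hchain k hnk hkm).2 p' hp' hle
    obtain ⟨v, hv, hv1, hv2⟩ := ih (k + 1) (by omega) (by omega) w hw hw2
    exact ⟨v, hv, hv1.trans hw1, hv2⟩

lemma redChain_compat_push (P : ℕ → Set α) (Q : ℕ → Set β) (f : α → β)
    (hQ : ∀ n, completeSub (Q n) (Q (n + 1)))
    (hred : ∀ n, ∀ p ∈ P (n + 1), ∀ q ∈ Q n, ∀ r : α,
      isReduction (P n) (P (n + 1)) r p →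
      compatIn (Q n) (f r) q → compatIn (Q (n + 1)) (f p) q)
    {n m : ℕ} {g : ℕ → α} {q : β}
    (hchain : redChain P n m g) (hgm : g m ∈ P m) (hq : q ∈ Q n) (hnm : n ≤ m)
    (hc : compatIn (Q n) (f (g n)) q) : compatIn (Q m) (f (g m)) q := by
  have key : ∀ j, n + j ≤ m → compatIn (Q (n + j)) (f (g (n + j))) q := by
    intro j
    induction j with
    | zero => intro _; exact hc
    | succ j ih =>
      intro hj
      have hj' : n + j ≤ m := by omega
      have hk : n + j < m := by omega
      have hmem : g (n + j + 1) ∈ P (n + j + 1) :=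
        redChain_mem P hchain hgm (n + j + 1) (by omega) (by omega)
      exact hred (n + j) (g (n + j + 1)) hmem q
        (chain_mono Q hQ (by omega : n ≤ n + j) hq) (g (n + j))
        (hchain (n + j) (by omega) hk) (ih hj')
  have := key (m - n) (by omega)
  rwa [Nat.add_sub_cancel' hnm] at this

end Aux

/-- if `P_ω = ⋃ P_n`, `Q_ω = ⋃ Q_n` are unions of increasing chains
of complete subposets, `f ↾ P_n : P_n → Q_n` is a complete embedding for each `n`,
and reductions interact correctly with `f`, then `f : P_ω → Q_ω` is a complete
embedding. -/
theorem union_complete_embedding [Preorder α] [Preorder β]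
    (P : ℕ → Set α) (Q : ℕ → Set β) (f : α → β)
    (hP : ∀ n, completeSub (P n) (P (n + 1)))
    (hQ : ∀ n, completeSub (Q n) (Q (n + 1)))
    (hfn : ∀ n, completeEmb (P n) (Q n) f)
    (hred : ∀ n, ∀ p ∈ P (n + 1), ∀ q ∈ Q n, ∀ r : α,
      isReduction (P n) (P (n + 1)) r p →
      compatIn (Q n) (f r) q → compatIn (Q (n + 1)) (f p) q) :
    completeEmb (⋃ n, P n) (⋃ n, Q n) f := by
  refine ⟨?_, ?_, ?_, ?_⟩
  · -- membership
    rintro p hp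
    obtain ⟨n, hn⟩ := mem_iUnion.mp hp
    exact mem_iUnion.mpr ⟨n, (hfn n).1 p hn⟩
  · -- order preservation
    rintro p hp q hq hle
    obtain ⟨a, ha⟩ := mem_iUnion.mp hp
    obtain ⟨b, hb⟩ := mem_iUnion.mp hq
    exact (hfn (max a b)).2.1 p (chain_mono P hP (le_max_left a b) ha) q
      (chain_mono P hP (le_max_right a b) hb) hle
  · -- incompatibility preservation
    rintro p hp q hq hinc hcQ
    obtain ⟨a, ha⟩ := mem_iUnion.mp hp
    obtain ⟨b, hb⟩ := mem_iUnion.mp hq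
    obtain ⟨w, hw, hw1, hw2⟩ := hcQ
    obtain ⟨c, hc⟩ := mem_iUnion.mp hw
    set N := max (max a b) c with hN
    have hpN : p ∈ P N := chain_mono P hP (by omega : a ≤ N) ha
    have hqN : q ∈ P N := chain_mono P hP (by omega : b ≤ N) hb
    have hcQN : compatIn (Q N) (f p) (f q) :=
      ⟨w, chain_mono Q hQ (by omega : c ≤ N) hc, hw1, hw2⟩
    have hcPN : compatIn (P N) p q := by
      by_contra h
      exact (hfn N).2.2.1 p hpN q hqN h hcQN
    obtain ⟨v, hv, hv1, hv2⟩ := hcPN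
    exact hinc ⟨v, mem_iUnion.mpr ⟨N, hv⟩, hv1, hv2⟩
  · -- predense preservation
    intro D hD hDpre q hq
    obtain ⟨n, hn⟩ := mem_iUnion.mp hq
    -- the set of starting points of reduction chains to elements below D
    set E : Set α := {r | r ∈ P n ∧ ∃ m, n ≤ m ∧ ∃ d ∈ D, d ∈ P m ∧
      ∃ s ∈ P m, s ≤ d ∧ ∃ g : ℕ → α, g n = r ∧ g m = s ∧ redChain P n m g} with hE
    have hEsub : E ⊆ P n := fun r hr => hr.1
    have hEpre : predenseIn (P n) E := by
      intro r' hr'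
      obtain ⟨d, hd, s, hs, hs1, hs2⟩ := hDpre r' (mem_iUnion.mpr ⟨n, hr'⟩)
      obtain ⟨m0, hsm0⟩ := mem_iUnion.mp hs
      obtain ⟨m1, hdm1⟩ := mem_iUnion.mp (hD hd)
      set m := max (max m0 m1) n with hm
      have hnm : n ≤ m := by omega
      have hsm : s ∈ P m := chain_mono P hP (by omega : m0 ≤ m) hsm0
      have hdm : d ∈ P m := chain_mono P hP (by omega : m1 ≤ m) hdm1
      obtain ⟨g, hgm, hchain⟩ := redChain_exists P hP n m s hsm hnm
      have hgn : g n ∈ P n :=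
        redChain_mem P hchain (hgm ▸ hsm) n le_rfl hnm
      have hrE : g n ∈ E :=
        ⟨hgn, m, hnm, d, hd, hdm, s, hsm, hs2, g, rfl, hgm, hchain⟩
      -- g n is compatible with r' in P n
      obtain ⟨v, hv, hv1, hv2⟩ :=
        redChain_reduction P hchain (m - n) n (by omega) le_rfl (g n) hgn le_rfl
      have hcm : compatIn (P m) r' (g n) :=
        ⟨v, hv, hv2.trans (hgm ▸ hs1), hv1⟩
      exact ⟨g n, hrE, compat_reflect P hP hnm r' hr' (g n) hgn hcm⟩
    have hfEpre : predenseIn (Q n) (f '' E) := (hfn n).2.2.2 E hEsub hEpre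
    obtain ⟨e, ⟨r, hrE, hre⟩, w, hw, hw1, hw2⟩ := hfEpre q hn
    obtain ⟨hrPn, m, hnm, d, hd, hdm, s, hsm, hsd, g, hgn, hgm, hchain⟩ := hrE
    have hcQn : compatIn (Q n) (f (g n)) q := ⟨w, hw, hw2.trans (hre ▸ hgn ▸ le_refl (f r)), hw1⟩
    have hcQm : compatIn (Q m) (f (g m)) q :=
      redChain_compat_push P Q f hQ hred hchain (hgm ▸ hsm) hn hnm hcQn
    obtain ⟨u, hu, hu1, hu2⟩ := hcQm
    have hfsd : f s ≤ f d := (hfn m).2.1 d hdm s hsm hsd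
    refine ⟨f d, ⟨d, hd, rfl⟩, u, mem_iUnion.mpr ⟨m, hu⟩, hu2, ?_⟩
    calc u ≤ f (g m) := hu1
      _ = f s := by rw [hgm]
      _ ≤ f d := hfsd
end

section
/- If f : P_ω → Q_ω is as in the previous hypothesis (complete on each P_n with the reduction-compatibility condition), then f preserves the ordering and incompatibility, and for every predense D ⊆ P_ω and every q ∈ Q_ω there exists p ∈ D with f(p) compatible with q. -/
open Set

variable {α β : Type*}

/-- under the hypotheses of the previous lemma, `f` preserves the
ordering and incompatibility on `P_ω`, and for every predense `D ⊆ P_ω` and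
every `q ∈ Q_ω` there is `p ∈ D` with `f p` compatible with `q` in `Q_ω`. -/
theorem union_embedding_predense [Preorder α] [Preorder β]
    (P : ℕ → Set α) (Q : ℕ → Set β) (f : α → β)
    (hP : ∀ n, completeSub (P n) (P (n + 1)))
    (hQ : ∀ n, completeSub (Q n) (Q (n + 1)))
    (hfn : ∀ n, completeEmb (P n) (Q n) f)
    (hred : ∀ n, ∀ p ∈ P (n + 1), ∀ q ∈ Q n, ∀ r : α,
      isReduction (P n) (P (n + 1)) r p →
      compatIn (Q n) (f r) q → compatIn (Q (n + 1)) (f p) q) :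
    (∀ p ∈ (⋃ n, P n), ∀ q ∈ (⋃ n, P n), q ≤ p → f q ≤ f p) ∧
    (∀ p ∈ (⋃ n, P n), ∀ q ∈ (⋃ n, P n), ¬ compatIn (⋃ n, P n) p q →
      ¬ compatIn (⋃ n, Q n) (f p) (f q)) ∧
    (∀ D ⊆ (⋃ n, P n), predenseIn (⋃ n, P n) D →
      ∀ q ∈ (⋃ n, Q n), ∃ p ∈ D, compatIn (⋃ n, Q n) (f p) q) := by
  -- monotonicity of the chains
  have Pmono : ∀ {m n : ℕ}, m ≤ n → P m ⊆ P n := by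
    intro m n h
    induction h with
    | refl => exact subset_rfl
    | @step k h ih => exact ih.trans (hP k).1
  have Qmono : ∀ {m n : ℕ}, m ≤ n → Q m ⊆ Q n := by
    intro m n h
    induction h with
    | refl => exact subset_rfl
    | @step k h ih => exact ih.trans (hQ k).1
  -- compatibility transfers down
  have compat_down : ∀ m n, m ≤ n → ∀ r ∈ P m, ∀ s ∈ P m,
      compatIn (P n) r s → compatIn (P m) r s := by
    intro m n h
    induction n, h using Nat.le_induction with
    | base => intro r _ s _ hc; exact hc
    | succ n hmn ih =>
      intro r hr s hs hc
      exact ih r hr s hs ((hP n).2.1 r (Pmono hmn hr) s (Pmono hmn hs) hc)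
  -- order preservation
  have ord : ∀ p ∈ (⋃ n, P n), ∀ q ∈ (⋃ n, P n), q ≤ p → f q ≤ f p := by
    intro p hp q hq hle
    rw [mem_iUnion] at hp hq
    obtain ⟨m, hp⟩ := hp
    obtain ⟨n, hq⟩ := hq
    exact (hfn (max m n)).2.1 p (Pmono (le_max_left m n) hp) q
      (Pmono (le_max_right m n) hq) hle
  refine ⟨ord, ?_, ?_⟩
  · -- incompatibility preservation
    intro p hp q hq hnc hcQ
    apply hnc
    rw [mem_iUnion] at hp hq
    obtain ⟨m, hp⟩ := hp
    obtain ⟨n, hq⟩ := hq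
    obtain ⟨r, hr, h1, h2⟩ := hcQ
    rw [mem_iUnion] at hr
    obtain ⟨k, hr⟩ := hr
    set N := max (max m n) k with hN
    have hpN : p ∈ P N := Pmono ((le_max_left m n).trans (le_max_left _ k)) hp
    have hqN : q ∈ P N := Pmono ((le_max_right m n).trans (le_max_left _ k)) hq
    have hrN : r ∈ Q N := Qmono (le_max_right _ k) hr
    have hc : compatIn (P N) p q := by
      by_contra h
      exact (hfn N).2.2.1 p hpN q hqN h ⟨r, hrN, h1, h2⟩
    obtain ⟨s, hs, hs1, hs2⟩ := hc
    exact ⟨s, mem_iUnion.mpr ⟨N, hs⟩, hs1, hs2⟩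
  · -- predensity
    -- key: iterated reductions
    have chain : ∀ j m, ∀ p ∈ P (m + j), ∃ r ∈ P m,
        (∀ s ∈ P m, s ≤ r → compatIn (P (m + j)) s p) ∧
        (∀ q' ∈ Q m, compatIn (Q m) (f r) q' → compatIn (Q (m + j)) (f p) q') := by
      intro j
      induction j with
      | zero =>
        intro m p hp
        exact ⟨p, hp, fun s hs hsp => ⟨s, hs, le_refl s, hsp⟩, fun q' _ hc => hc⟩
      | succ j ih =>
        intro m p hp
        have e1 : (m + 1) + j = m + (j + 1) := by omega
        have hp' : p ∈ P ((m + 1) + j) := by rw [e1]; exact hp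
        obtain ⟨r', hr'mem, hA, hB⟩ := ih (m + 1) p hp'
        obtain ⟨r, hrred⟩ := (hP m).2.2 r' hr'mem
        refine ⟨r, hrred.1, ?_, ?_⟩
        · intro s hs hsr
          obtain ⟨t, ht1, hts, htr'⟩ := hrred.2 s hs hsr
          obtain ⟨u, hu1, hut, hup⟩ := hA t ht1 htr'
          have hu1' : u ∈ P (m + (j + 1)) := by rw [← e1]; exact hu1
          exact ⟨u, hu1', hut.trans hts, hup⟩
        · intro q' hq' hc
          have h1 : compatIn (Q (m + 1)) (f r') q' :=
            hred m r' hr'mem q' hq' r hrred hc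
          have h2 := hB q' (Qmono (Nat.le_succ m) hq') h1
          rw [e1] at h2
          exact h2
    intro D hD hDpre q hq
    rw [mem_iUnion] at hq
    obtain ⟨m, hq⟩ := hq
    -- the set of iterated reductions of elements below members of D
    set E : Set α := { r | r ∈ P m ∧ ∃ d ∈ D, ∃ j, ∃ p ∈ P (m + j), p ≤ d ∧
      (∀ q' ∈ Q m, compatIn (Q m) (f r) q' → compatIn (Q (m + j)) (f p) q') } with hE
    have hEsub : E ⊆ P m := fun r hr => hr.1
    have hEpre : predenseIn (P m) E := by
      intro s hs
      obtain ⟨d, hd, t, ht, hts, htd⟩ := hDpre s (mem_iUnion.mpr ⟨m, hs⟩)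
      rw [mem_iUnion] at ht
      obtain ⟨k, ht⟩ := ht
      have ht' : t ∈ P (m + k) := Pmono (Nat.le_add_left k m) ht
      obtain ⟨r, hrm, hA, hB⟩ := chain k m t ht'
      have hcompat : compatIn (P (m + k)) r s := by
        obtain ⟨u, hu1, hur, hut⟩ := hA r hrm (le_refl r)
        exact ⟨u, hu1, hur, hut.trans hts⟩
      refine ⟨r, ⟨hrm, d, hd, k, t, ht', htd, hB⟩, ?_⟩
      exact compat_down m (m + k) (Nat.le_add_right m k) s hs r hrm
          (by obtain ⟨u, hu1, hur, hus⟩ := hcompat; exact ⟨u, hu1, hus, hur⟩)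
    have hfE := (hfn m).2.2.2 E hEsub hEpre q hq
    obtain ⟨e', ⟨e, heE, rfl⟩, he'⟩ := hfE
    obtain ⟨hem, d, hd, j, p, hpP, hpd, hBprop⟩ := heE
    obtain ⟨u, hu1, huq, hue⟩ := he'
    have hc : compatIn (Q (m + j)) (f p) q := hBprop q hq ⟨u, hu1, hue, huq⟩
    obtain ⟨v, hv1, hvp, hvq⟩ := hc
    have hdP : d ∈ ⋃ n, P n := hD hd
    have hfp_le : f p ≤ f d := ord d hdP p (mem_iUnion.mpr ⟨m + j, hpP⟩) hpd
    exact ⟨d, hd, v, mem_iUnion.mpr ⟨m + j, hv1⟩, hvp.trans hfp_le, hvq⟩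
end

section
/- A family of Borel sets closed under countable intersections modulo a ccc σ-ideal I contains a minimal element modulo I: if 𝔅 is a nonempty family of Borel sets closed under countable intersections (any countable subfamily has a member below its intersection mod I), and I is a ccc σ-ideal, then there is B ∈ 𝔅 such that for every B' ∈ 𝔅, B \ B' ∈ I. -/
open Set

/-- a nonempty family of Borel sets closed under countable
intersections modulo a ccc σ-ideal `I` contains a minimal element modulo `I`. -/
theorem minimal_mod_ideal (I : Set (Set ℝ))
    (hdown : ∀ A B : Set ℝ, A ∈ I → B ⊆ A → B ∈ I)
    (hsigma : ∀ A : ℕ → Set ℝ, (∀ n, A n ∈ I) → (⋃ n, A n) ∈ I)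
    (hccc : ∀ 𝒜 : Set (Set ℝ), (∀ A ∈ 𝒜, MeasurableSet A ∧ A ∉ I) →
      (∀ A ∈ 𝒜, ∀ B ∈ 𝒜, A ≠ B → A ∩ B ∈ I) → 𝒜.Countable)
    (𝔅 : Set (Set ℝ)) (h𝔅ne : 𝔅.Nonempty)
    (h𝔅m : ∀ B ∈ 𝔅, MeasurableSet B)
    (hclosed : ∀ B : ℕ → Set ℝ, (∀ n, B n ∈ 𝔅) →
      ∃ B' ∈ 𝔅, B' \ (⋂ n, B n) ∈ I) :
    ∃ B ∈ 𝔅, ∀ B' ∈ 𝔅, B \ B' ∈ I := by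
  classical
  obtain ⟨b₀, hb₀⟩ := h𝔅ne
  obtain ⟨B₁, hB₁, hB₁I⟩ := hclosed (fun _ => b₀) (fun _ => hb₀)
  have hempty : (∅ : Set ℝ) ∈ I := hdown _ _ hB₁I (empty_subset _)
  have hunion : ∀ X Y : Set ℝ, X ∈ I → Y ∈ I → X ∪ Y ∈ I := by
    intro X Y hX hY
    have h := hsigma (fun n => if n = 0 then X else Y)
      (by intro n; split <;> assumption)
    refine hdown _ _ h ?_
    rintro x (hx | hx)
    · exact mem_iUnion.2 ⟨0, by simpa⟩
    · exact mem_iUnion.2 ⟨1, by simpa⟩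
  set S : Set (Set (Set ℝ)) :=
    {𝒜 | (∀ A ∈ 𝒜, MeasurableSet A ∧ A ∉ I ∧ ∃ B' ∈ 𝔅, A ∩ B' ∈ I) ∧
      ∀ A ∈ 𝒜, ∀ B ∈ 𝒜, A ≠ B → A ∩ B ∈ I} with hSdef
  have hchainS : ∀ c ⊆ S, IsChain (· ⊆ ·) c → ∃ ub ∈ S, ∀ s ∈ c, s ⊆ ub := by
    intro c hc hchain
    refine ⟨⋃₀ c, ⟨?_, ?_⟩, fun s hs => subset_sUnion_of_mem hs⟩
    · rintro A ⟨t, htc, hAt⟩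
      exact (hc htc).1 A hAt
    · rintro A ⟨t, htc, hAt⟩ B ⟨u, huc, hBu⟩ hne
      rcases hchain.total htc huc with h | h
      · exact (hc huc).2 A (h hAt) B hBu hne
      · exact (hc htc).2 A hAt B (h hBu) hne
  obtain ⟨𝒜, h𝒜max⟩ := zorn_subset S hchainS
  have h𝒜S : 𝒜 ∈ S := h𝒜max.1
  have hcount : 𝒜.Countable :=
    hccc 𝒜 (fun A hA => ⟨(h𝒜S.1 A hA).1, (h𝒜S.1 A hA).2.1⟩) h𝒜S.2
  let w : Set ℝ → Set ℝ := fun A =>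
    if h : ∃ B' ∈ 𝔅, A ∩ B' ∈ I then h.choose else b₀
  have hw𝔅 : ∀ A, w A ∈ 𝔅 := by
    intro A
    simp only [w]
    split
    · exact ‹∃ B' ∈ 𝔅, A ∩ B' ∈ I›.choose_spec.1
    · exact hb₀
  have hwI : ∀ A ∈ 𝒜, A ∩ w A ∈ I := by
    intro A hA
    have h := (h𝒜S.1 A hA).2.2
    simp only [w, dif_pos h]
    exact h.choose_spec.2
  have hWc : (insert b₀ (w '' 𝒜)).Countable := (hcount.image w).insert b₀
  obtain ⟨f, hf⟩ := hWc.exists_eq_range ⟨b₀, mem_insert _ _⟩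
  have hf𝔅 : ∀ n, f n ∈ 𝔅 := by
    intro n
    have h : f n ∈ insert b₀ (w '' 𝒜) := hf ▸ mem_range_self n
    rcases h with h | ⟨A, _, hA⟩
    · exact h ▸ hb₀
    · exact hA ▸ hw𝔅 A
  obtain ⟨B, hB𝔅, hBI⟩ := hclosed f hf𝔅
  refine ⟨B, hB𝔅, fun B' hB' => ?_⟩
  by_contra hA
  set A := B \ B' with hAdef
  have hAmeas : MeasurableSet A := (h𝔅m B hB𝔅).diff (h𝔅m B' hB')
  have hAw : ∃ C ∈ 𝔅, A ∩ C ∈ I :=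
    ⟨B', hB', hdown _ _ hempty (by rintro x ⟨⟨_, h1⟩, h2⟩; exact h1 h2)⟩
  have key : ∃ A₀ ∈ 𝒜, A ∩ A₀ ∉ I := by
    by_cases hmem : A ∈ 𝒜
    · exact ⟨A, hmem, by simpa using hA⟩
    · by_contra hcon
      push_neg at hcon
      have hins : insert A 𝒜 ∈ S := by
        constructor
        · rintro C (rfl | hC)
          · exact ⟨hAmeas, hA, hAw⟩
          · exact h𝒜S.1 C hC
        · rintro C (rfl | hC) D (rfl | hD) hne
          · exact absurd rfl hne
          · exact hcon D hD
          · rw [Set.inter_comm]; exact hcon C hC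
          · exact h𝒜S.2 C hC D hD hne
      have hsub := h𝒜max.2 hins (subset_insert A 𝒜)
      exact hmem (hsub (mem_insert A 𝒜))
  obtain ⟨A₀, hA₀𝒜, hA₀⟩ := key
  have hwmem : w A₀ ∈ insert b₀ (w '' 𝒜) :=
    mem_insert_of_mem _ (mem_image_of_mem w hA₀𝒜)
  rw [hf] at hwmem
  obtain ⟨n₀, hn₀⟩ := hwmem
  have hsub : A ∩ A₀ ⊆ (B \ ⋂ n, f n) ∪ (A₀ ∩ w A₀) := by
    rintro x ⟨hxA, hxA₀⟩
    by_cases hx : x ∈ ⋂ n, f n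
    · right
      refine ⟨hxA₀, ?_⟩
      have h := mem_iInter.1 hx n₀
      rwa [hn₀] at h
    · left; exact ⟨hxA.1, hx⟩
  exact hA₀ (hdown _ _ (hunion _ _ hBI (hwI A₀ hA₀𝒜)) hsub)
end
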